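/- arXiv:1701.07077 — 2 statements merged into one kernel-verified Lean document; each statement's English description precedes it below -/
import Mathlib

section
/- Let m ≥ 2 and let n ≥ 0 have base-m representation n = d_0 + d_1 m + ... + d_t m^t with 0 ≤ d_j ≤ m-1. Then the number b_m(n) of m-ary partitions of n (partitions of n all of whose parts are powers of m) satisfies b_m(n) ≡ ∏_{j=1}^{t} (d_j + 1) (mod m). -/
open Finset

/-- An `m`-ary partition of `n`: a finitely supported function `c : ℕ →₀ ℕ`, where
`c j` is the multiplicity of the part `m^j`, with total sum `∑ c j · m^j = n`. -/
def IsMaryPartition (m : ℕ) (n : ℕ) (c : ℕ →₀ ℕ) : Prop :=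
  c.sum (fun j v => v * m ^ j) = n

/-!
Splitting off the parts equal to `1` and dividing the remaining parts by `m` gives
`b(n) = ∑_{q ≤ n/m} b(q) = S(n/m)`, where `S(N) = ∑_{q ≤ N} b(q)`. Hence `S(N) = ∑_{q ≤ N} S(q/m)`,
and in this sum every value `S(k)` with `k < N/m` occurs exactly `m` times, so
`S(N) ≡ (N mod m + 1) · S(N/m) (mod m)`. Peeling off base-`m` digits gives
`S(N) ≡ ∏ (digit + 1)`, and the digits of `n/m` are `d₁, …, d_t`.
-/

namespace Finset

variable {M : Type*} [AddCommMonoid M] (f : ℕ → M) {m : ℕ}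

theorem sum_range_comp_mul_add_div {r : ℕ} (hr : r ≤ m) (K : ℕ) :
    ∑ x ∈ range r, f ((m * K + x) / m) = r • f K := by
  rw [sum_congr rfl fun x hx => ?_, sum_const, card_range]
  have hxm : x < m := (mem_range.1 hx).trans_le hr
  rw [Nat.mul_add_div (by omega), Nat.div_eq_of_lt hxm, add_zero]

theorem sum_range_mul_comp_div (K : ℕ) :
    ∑ q ∈ range (m * K), f (q / m) = m • ∑ k ∈ range K, f k := by
  induction K with
  | zero => simp
  | succ K ih =>
    rw [mul_add_one, sum_range_add, ih, sum_range_comp_mul_add_div f le_rfl, sum_range_succ,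
      smul_add]

theorem sum_range_succ_comp_div (hm : 0 < m) (N : ℕ) :
    ∑ q ∈ range (N + 1), f (q / m) = m • ∑ k ∈ range (N / m), f k + (N % m + 1) • f (N / m) := by
  conv_lhs => rw [← Nat.div_add_mod N m, add_assoc, sum_range_add]
  rw [sum_range_mul_comp_div, sum_range_comp_mul_add_div f (Nat.mod_lt N hm)]

end Finset

theorem sum_range_succ_mul_pow (e : ℕ → ℕ) (m t : ℕ) :
    ∑ j ∈ range (t + 1), e j * m ^ j = e 0 + m * ∑ j ∈ range t, e (j + 1) * m ^ j := by
  rw [sum_range_succ', mul_sum, add_comm]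
  simp only [pow_succ, pow_zero, mul_one]
  exact congrArg _ (sum_congr rfl fun _ _ => by ring)

theorem apply_sum_digits_modEq_prod {f : ℕ → ℕ} {m : ℕ} (h0 : f 0 = 1)
    (hf : ∀ N, f N ≡ (N % m + 1) * f (N / m) [MOD m]) (t : ℕ) {e : ℕ → ℕ}
    (he : ∀ j < t, e j < m) :
    f (∑ j ∈ range t, e j * m ^ j) ≡ ∏ j ∈ range t, (e j + 1) [MOD m] := by
  induction t generalizing e with
  | zero => simpa [h0] using Nat.ModEq.refl 1
  | succ t ih =>
    have he0 : e 0 < m := he 0 t.succ_pos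
    set Q := ∑ j ∈ range t, e (j + 1) * m ^ j
    have hstep := hf (e 0 + m * Q)
    rw [Nat.add_mul_mod_self_left, Nat.mod_eq_of_lt he0, Nat.add_mul_div_left _ _ (by omega),
      Nat.div_eq_of_lt he0, zero_add] at hstep
    rw [sum_range_succ_mul_pow, prod_range_succ', mul_comm _ (e 0 + 1)]
    exact hstep.trans ((ih fun j hj => he (j + 1) (by omega)).mul_left _)

namespace MaryPartition

section Shift

variable {M : Type*} [AddZeroClass M]

noncomputable def tail (c : ℕ →₀ M) : ℕ →₀ M :=
  c.comapDomain Nat.succ Nat.succ_injective.injOn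

noncomputable def cons (a : M) (c : ℕ →₀ M) : ℕ →₀ M :=
  Finsupp.single 0 a + c.embDomain ⟨Nat.succ, Nat.succ_injective⟩

@[simp] theorem tail_apply (c : ℕ →₀ M) (j : ℕ) : tail c j = c (j + 1) := rfl

@[simp] theorem cons_apply_zero (a : M) (c : ℕ →₀ M) : cons a c 0 = a := by
  simp [cons, Finsupp.embDomain_of_notMem_range]

@[simp] theorem cons_apply_succ (a : M) (c : ℕ →₀ M) (j : ℕ) : cons a c (j + 1) = c j := by
  simpa [cons] using Finsupp.embDomain_apply_self ⟨Nat.succ, Nat.succ_injective⟩ c j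

@[simp] theorem tail_cons (a : M) (c : ℕ →₀ M) : tail (cons a c) = c := by
  ext j; simp

theorem cons_zero_tail (c : ℕ →₀ M) : cons (c 0) (tail c) = c := by
  ext (_ | j) <;> simp

end Shift

def weight (m : ℕ) (c : ℕ →₀ ℕ) : ℕ := c.sum fun j v => v * m ^ j

variable {m : ℕ}

theorem isMaryPartition_iff {n : ℕ} {c : ℕ →₀ ℕ} : IsMaryPartition m n c ↔ weight m c = n :=
  Iff.rfl

theorem weight_cons (a : ℕ) (c : ℕ →₀ ℕ) : weight m (cons a c) = a + m * weight m c := by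
  rw [weight, cons, Finsupp.sum_add_index' (fun _ => zero_mul _) (fun _ _ _ => add_mul _ _ _),
    Finsupp.sum_single_index (zero_mul _), Finsupp.sum_embDomain, weight, Finsupp.mul_sum]
  simp only [pow_zero, mul_one, Function.Embedding.coeFn_mk, Nat.succ_eq_add_one]
  exact congrArg _ (Finsupp.sum_congr fun _ _ => by ring)

theorem weight_eq_zero_iff (hm : m ≠ 0) {c : ℕ →₀ ℕ} : weight m c = 0 ↔ c = 0 := by
  refine ⟨fun hc => ?_, fun hc => by simp [hc, weight]⟩
  ext j
  by_contra hj
  have := Finset.sum_eq_zero_iff.1 hc j (Finsupp.mem_support_iff.2 hj)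
  simp_all

theorem isMaryPartition_zero_iff (hm : m ≠ 0) {c : ℕ →₀ ℕ} : IsMaryPartition m 0 c ↔ c = 0 :=
  weight_eq_zero_iff hm

theorem apply_zero_add_mul_weight_tail {n : ℕ} {c : ℕ →₀ ℕ} (hc : IsMaryPartition m n c) :
    c 0 + m * weight m (tail c) = n := by
  rw [← weight_cons, cons_zero_tail]
  exact hc

/-- `c ↦ tail c`: forget the parts equal to `1` and divide the other parts by `m`. -/
noncomputable def sigmaEquiv (hm : 0 < m) (n : ℕ) :
    {c // IsMaryPartition m n c} ≃ Σ q : Fin (n / m + 1), {c // IsMaryPartition m q c} where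
  toFun c := ⟨⟨weight m (tail c.1), Nat.lt_succ_of_le <| (Nat.le_div_iff_mul_le hm).2 <| by
    have := apply_zero_add_mul_weight_tail c.2
    rw [mul_comm]
    omega⟩, tail c.1, rfl⟩
  invFun x := ⟨cons (n - m * x.1) x.2.1, by
    have := (Nat.le_div_iff_mul_le hm).1 (Nat.le_of_lt_succ x.1.2)
    rw [isMaryPartition_iff, weight_cons, isMaryPartition_iff.1 x.2.2, mul_comm]
    omega⟩
  left_inv c := by
    have := apply_zero_add_mul_weight_tail c.2
    ext1
    simp only [show n - m * weight m (tail c.1) = c.1 0 by omega, cons_zero_tail]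
  right_inv x := Sigma.subtype_ext (Fin.ext (by simpa using isMaryPartition_iff.1 x.2.2))
    (tail_cons _ _)

theorem finite_maryPartition (hm : 2 ≤ m) (n : ℕ) : Finite {c // IsMaryPartition m n c} := by
  induction n using Nat.strong_induction_on with
  | _ n ih =>
  rcases n.eq_zero_or_pos with rfl | hn
  · exact Finite.of_equiv _
      (Equiv.subtypeEquivRight fun _ => (isMaryPartition_zero_iff (by omega)).symm)
  · have := fun q : Fin (n / m + 1) => ih q (by have := Nat.div_lt_self hn hm; omega)
    exact Finite.of_equiv _ (sigmaEquiv (by omega) n).symm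

noncomputable def count (m n : ℕ) : ℕ := Nat.card {c // IsMaryPartition m n c}

noncomputable def countSum (m N : ℕ) : ℕ := ∑ q ∈ range (N + 1), count m q

theorem count_zero (hm : m ≠ 0) : count m 0 = 1 := by
  rw [count, Nat.card_congr (Equiv.subtypeEquivRight fun _ => isMaryPartition_zero_iff hm),
    Nat.card_unique]

theorem count_eq_countSum_div (hm : 2 ≤ m) (n : ℕ) : count m n = countSum m (n / m) := by
  have := finite_maryPartition hm
  rw [count, Nat.card_congr (sigmaEquiv (by omega) n), Nat.card_sigma, countSum,
    ← Fin.sum_univ_eq_sum_range]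
  rfl

theorem countSum_zero (hm : m ≠ 0) : countSum m 0 = 1 := by
  simp [countSum, count_zero hm]

theorem countSum_modEq (hm : 2 ≤ m) (N : ℕ) :
    countSum m N ≡ (N % m + 1) * countSum m (N / m) [MOD m] := by
  rw [countSum, sum_congr rfl fun q _ => count_eq_countSum_div hm q,
    sum_range_succ_comp_div _ (by omega), smul_eq_mul, smul_eq_mul]
  exact Nat.modulus_mul_add_modEq_iff.2 rfl

end MaryPartition

open MaryPartition in
/-- **Andrews–Fraenkel–Sellers, Theorem 1 of [afs15].**  Let `m ≥ 2` and let
`n = d₀ + d₁ m + ⋯ + d_t m^t` with `0 ≤ d_j ≤ m-1` be the base-`m` representation of `n`.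
Then the number `b_m(n)` of `m`-ary partitions of `n` satisfies
`b_m(n) ≡ ∏_{j=1}^{t} (d_j + 1) (mod m)`. -/
theorem mary_count_mod (m : ℕ) (hm : 2 ≤ m)
    (n t : ℕ) (d : ℕ → ℕ) (hd : ∀ j, j ≤ t → d j ≤ m - 1)
    (hn : n = ∑ j ∈ range (t + 1), d j * m ^ j) :
    Nat.card {c : ℕ →₀ ℕ // IsMaryPartition m n c}
      ≡ ∏ j ∈ Icc 1 t, (d j + 1) [MOD m] := by
  have hdigit : ∀ j ≤ t, d j < m := fun j hj => by have := hd j hj; omega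
  have hdiv : n / m = ∑ j ∈ range t, d (j + 1) * m ^ j := by
    rw [hn, sum_range_succ_mul_pow, Nat.add_mul_div_left _ _ (by omega),
      Nat.div_eq_of_lt (hdigit 0 t.zero_le), zero_add]
  have hprod : ∏ j ∈ Icc 1 t, (d j + 1) = ∏ j ∈ range t, (d (j + 1) + 1) := by
    rw [← Ico_add_one_right_eq_Icc, prod_Ico_eq_prod_range, Nat.add_sub_cancel]
    simp only [add_comm 1]
  rw [← count, count_eq_countSum_div hm, hdiv, hprod]
  exact apply_sum_digits_modEq_prod (countSum_zero (by omega)) (countSum_modEq hm) t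
    fun j hj => hdigit (j + 1) hj
end

section
/- Let m ≥ 2 and let k = (k_0, k_1, ...) be positive integers with m coprime to (k_0-1)! and to k_j! for every j ≥ 1. Then for every i ≥ 0, the following identity holds in (ZMod m)⟦q⟧: (1 - q^{m^{i+1}}) · ∏_{j=0}^{i} (G_{m^j}^{k_j} - 1) = (∑_{ℓ_0=1}^{m} C(k_0-1+ℓ_0, k_0-1) q^{ℓ_0}) · ∏_{j=1}^{i} (∑_{ℓ_j=0}^{m-1} (C(k_j+ℓ_j, k_j) - 1) q^{ℓ_j m^j}). Equivalently, ∏_{j=0}^{i} ((1-q^{m^j})^{-k_j} - 1) = (1-q^{m^{i+1}})^{-1} · (∑_{ℓ_0=1}^{m} C(k_0-1+ℓ_0, k_0-1) q^{ℓ_0}) · ∏_{j=1}^{i} (∑_{ℓ_j=0}^{m-1} (C(k_j+ℓ_j, k_j) - 1) q^{ℓ_j m^j}). -/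
/-!
Since `k!` is invertible mod `m` and `k! · C(k + n, k) = (n + 1) ⋯ (n + k)` is a polynomial in
`n`, the sequence `n ↦ C(k + n, k)` is `m`-periodic mod `m`. Hence `1 - q^m` times
`G₁^{k+1} = ∑ C(k + n, k) qⁿ` is the polynomial `∑_{ℓ < m} C(k + ℓ, k) q^ℓ`; this is the factor
`j = 0` (as `C(k + m, k) ≡ 1`), and with `1 - q^m = (1 - q)(1 + q + ⋯ + q^{m-1})` it gives
`(1 - q^m)(G₁^k - 1) = (1 - q) ∑_{ℓ < m} (C(k + ℓ, k) - 1) q^ℓ`. Substituting `q ↦ q^{m^j}`,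
`(1 - q^{m^{j+1}})(G_{m^j}^{k_j} - 1) = (1 - q^{m^j}) ∑_{ℓ < m} (C(k_j + ℓ, k_j) - 1) q^{ℓ m^j}`,
and these identities telescope in the product over `j`.
-/

open PowerSeries Finset
open scoped Nat

variable {R : Type*} [CommRing R]

theorem Nat.periodic_cast_add_choose {m k : ℕ} (hm : (m : R) = 0) (hk : IsUnit (k ! : R)) :
    Function.Periodic (fun n ↦ ((k + n).choose k : R)) m := by
  have factorial_mul_choose (a : ℕ) :
      (k ! : R) * ((k + a).choose k : R) = (ascPochhammer R k).eval ((a : R) + 1) := by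
    rw [← Nat.cast_mul, add_comm k a, ← Nat.ascFactorial_eq_factorial_mul_choose,
      ← ascPochhammer_nat_eq_natCast_ascFactorial, Nat.cast_succ]
  intro n
  refine hk.mul_left_cancel ?_
  rw [factorial_mul_choose, factorial_mul_choose, Nat.cast_add, hm, add_zero]

namespace PowerSeries

theorem one_sub_X_pow_mul_mk_of_periodic {m : ℕ} {f : ℕ → R} (hf : Function.Periodic f m) :
    (1 - X ^ m) * mk f = ∑ ℓ ∈ range m, C (f ℓ) * X ^ ℓ := by
  ext n
  simp only [sub_mul, one_mul, map_sub, coeff_X_pow_mul', coeff_mk, map_sum, coeff_C_mul_X_pow,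
    sum_ite_eq, mem_range]
  by_cases h : m ≤ n
  · rw [if_pos h, if_neg (by omega), ← hf (n - m), Nat.sub_add_cancel h, sub_self]
  · rw [if_neg h, if_pos (by omega), sub_zero]

theorem pow_succ_eq_mk_choose {g : R⟦X⟧} (hg : (1 - X) * g = 1) (k : ℕ) :
    g ^ (k + 1) = mk fun n ↦ ((k + n).choose k : R) := by
  refine left_inv_eq_right_inv (a := ((1 - X) ^ (k + 1) : R⟦X⟧)) ?_ ?_
  · rw [← mul_pow, mul_comm, hg, one_pow]
  · rw [← invOneSubPow_val_succ_eq_mk_add_choose, ← invOneSubPow_inv_eq_one_sub_pow,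
      Units.inv_val]

theorem one_sub_X_pow_mul_pow_succ {m k : ℕ} (hm : (m : R) = 0) (hk : IsUnit (k ! : R))
    {g : R⟦X⟧} (hg : (1 - X) * g = 1) :
    (1 - X ^ m) * g ^ (k + 1) = ∑ ℓ ∈ range m, C ((k + ℓ).choose k : R) * X ^ ℓ := by
  rw [pow_succ_eq_mk_choose hg,
    one_sub_X_pow_mul_mk_of_periodic (Nat.periodic_cast_add_choose hm hk)]

theorem one_sub_X_pow_mul_pow_succ_sub_one {m k : ℕ} (hm : (m : R) = 0) (hk : IsUnit (k ! : R))
    {g : R⟦X⟧} (hg : (1 - X) * g = 1) :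
    (1 - X ^ m) * (g ^ (k + 1) - 1) = ∑ ℓ ∈ Icc 1 m, C ((k + ℓ).choose k : R) * X ^ ℓ := by
  have hlast : ((k + m).choose k : R) = 1 := by
    simpa using Nat.periodic_cast_add_choose hm hk 0
  rw [mul_sub, mul_one, one_sub_X_pow_mul_pow_succ hm hk hg, ← Ico_add_one_right_eq_Icc,
    sum_Ico_eq_sub _ (by omega), sum_range_succ, sum_range_one, hlast]
  simp only [add_zero, Nat.choose_self, Nat.cast_one, map_one, one_mul, pow_zero]
  ring

theorem one_sub_X_pow_mul_pow_sub_one {m k : ℕ} (hm : (m : R) = 0) (hk : IsUnit (k ! : R))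
    {g : R⟦X⟧} (hg : (1 - X) * g = 1) :
    (1 - X ^ m) * (g ^ k - 1)
      = (1 - X) * ∑ ℓ ∈ range m, C ((k + ℓ).choose k - 1 : R) * X ^ ℓ := by
  calc (1 - X ^ m) * (g ^ k - 1)
      = (1 - X) * ((1 - X ^ m) * g ^ (k + 1)) - (1 - X) * ∑ ℓ ∈ range m, X ^ ℓ := by
        rw [mul_neg_geom_sum]
        linear_combination (-(1 - X ^ m) * g ^ k) * hg
    _ = _ := by
        rw [one_sub_X_pow_mul_pow_succ hm hk hg, ← mul_sub, ← sum_sub_distrib]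
        simp only [map_sub, map_one, sub_mul, one_mul]

theorem eq_expand_mk_one {r : ℕ} (hr : r ≠ 0) {g : R⟦X⟧} (hg : (1 - X ^ r) * g = 1) :
    g = expand r hr (mk 1) := by
  refine left_inv_eq_right_inv (a := (1 - X ^ r : R⟦X⟧)) (by rw [mul_comm, hg]) ?_
  rw [← expand_X r hr, ← map_one (expand r hr), ← map_sub, ← map_mul, mul_comm,
    mk_one_mul_one_sub_eq_one, map_one]

theorem one_sub_X_pow_mul_mul_pow_sub_one {m k r : ℕ} (hm : (m : R) = 0)
    (hk : IsUnit (k ! : R)) (hr : r ≠ 0) {g : R⟦X⟧} (hg : (1 - X ^ r) * g = 1) :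
    (1 - X ^ (r * m)) * (g ^ k - 1)
      = (1 - X ^ r) * ∑ ℓ ∈ range m, C ((k + ℓ).choose k - 1 : R) * X ^ (ℓ * r) := by
  have h := congrArg (expand r hr) <| one_sub_X_pow_mul_pow_sub_one hm hk
    (by rw [mul_comm]; exact mk_one_mul_one_sub_eq_one (S := R))
  simp only [map_mul, map_sub, map_one, map_pow, expand_X, map_sum, expand_C] at h
  rw [eq_expand_mk_one hr hg, pow_mul, h]
  simp only [← pow_mul, mul_comm r, map_sub, map_one]

end PowerSeries

/-- **finite product expansion without gaps, equation (4) of the paper.**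
Let `m ≥ 2` and `k₀, k₁, …` be positive integers with `m` coprime to `(k₀-1)!` and to
`k_j!` for `j ≥ 1`, and let `G r` denote the inverse of `1 - q^r` in `(ZMod m)⟦q⟧`.
Then for every `i ≥ 0`, in `(ZMod m)⟦q⟧` we have
`(1 - q^{m^{i+1}}) · ∏_{j=0}^{i} (G_{m^j}^{k_j} - 1)
  = (∑_{ℓ₀=1}^{m} C(k₀-1+ℓ₀, k₀-1) q^{ℓ₀})
    · ∏_{j=1}^{i} (∑_{ℓ=0}^{m-1} (C(k_j+ℓ, k_j) - 1) q^{ℓ m^j})`. -/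
theorem finite_product_gapfree_expansion_mod (m : ℕ) (hm : 2 ≤ m) (k : ℕ → ℕ)
    (hk : ∀ j, 0 < k j)
    (h0 : Nat.Coprime m (Nat.factorial (k 0 - 1)))
    (hj : ∀ j, 1 ≤ j → Nat.Coprime m (Nat.factorial (k j)))
    (G : ℕ → PowerSeries (ZMod m)) (hG : ∀ r, 1 ≤ r → (1 - X ^ r) * G r = 1) (i : ℕ) :
    (1 - X ^ m ^ (i + 1)) * ∏ j ∈ range (i + 1), ((G (m ^ j)) ^ k j - 1)
      = (∑ ℓ ∈ Icc 1 m, (PowerSeries.C (R := ZMod m)) ((k 0 - 1 + ℓ).choose (k 0 - 1) : ZMod m) * X ^ ℓ)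
        * ∏ j ∈ Icc 1 i, ∑ ℓ ∈ range m,
            (PowerSeries.C (R := ZMod m)) (((k j + ℓ).choose (k j) : ZMod m) - 1) * X ^ (ℓ * m ^ j) := by
  have hunit {a : ℕ} (h : Nat.Coprime m a) : IsUnit (a : ZMod m) :=
    (ZMod.isUnit_iff_coprime a m).2 h.symm
  induction i with
  | zero =>
    obtain ⟨k₀, hk₀⟩ := Nat.exists_eq_add_one_of_ne_zero (hk 0).ne'
    rw [hk₀, Nat.add_sub_cancel] at h0
    simpa [hk₀] using PowerSeries.one_sub_X_pow_mul_pow_succ_sub_one (ZMod.natCast_self m)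
      (hunit h0) (by simpa using hG 1 le_rfl)
  | succ i ih =>
    have hr : m ^ (i + 1) ≠ 0 := pow_ne_zero _ (by omega)
    have step := PowerSeries.one_sub_X_pow_mul_mul_pow_sub_one (ZMod.natCast_self m)
      (hunit (hj (i + 1) (by omega))) hr (hG _ (Nat.one_le_iff_ne_zero.2 hr))
    rw [prod_range_succ, prod_Icc_succ_top (by omega), pow_succ m (i + 1)]
    linear_combination (∏ j ∈ range (i + 1), (G (m ^ j) ^ k j - 1)) * step
      + (∑ ℓ ∈ range m, C ((k (i + 1) + ℓ).choose (k (i + 1)) - 1 : ZMod m)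
          * X ^ (ℓ * m ^ (i + 1))) * ih
end
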